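/- arXiv:2505.21111 — 2 statements merged into one kernel-verified Lean document; each statement's English description precedes it below -/
import Mathlib

section
/- In the formal power series ring ℤ[[q]], f_2 / f_1² = f_8⁵ / (f_2⁴ f_{16}²) + 2q · f_4² f_{16}² / (f_2⁴ f_8). -/
/-- `f r = ∏_{n ≥ 1} (1 - q^{r n})` in `ℤ[[q]]`, defined coefficientwise: the coefficient of
`q^n` agrees with that of every sufficiently long partial product (for `r ≥ 1`, the factors with
index beyond `n` do not affect the coefficient of `q^n`). -/
noncomputable def f (r : ℕ) : PowerSeries ℤ :=
  PowerSeries.mk fun n =>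
    PowerSeries.coeff n
      (∏ i ∈ Finset.range (n + 1), (1 - (PowerSeries.X : PowerSeries ℤ) ^ (r * (i + 1))))

/-!
Splitting `φ(q) = ∑_{k ∈ ℤ} q^{k²}` by the parity of `k` gives `φ(q) = φ(q⁴) + 2 q ψ(q⁸)`, where
`ψ(q) = ∑_{k ≥ 0} q^{k(k+1)/2}`. Gauss's product formulas `φ(q) = f₂⁵ / (f₁² f₄²)` and
`ψ(q) = f₂² / f₁` turn this into the dissection after multiplying by `f₄² / f₂⁴`.

Both formulas are cases of the Jacobi triple product, combined with `(-q; q²)_∞ = f₂² / (f₁ f₄)`,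
which comes from `f₁ = (q; q²)_∞ f₂` and `(-q; q²)_∞ (q; q²)_∞ = (q²; q⁴)_∞`. The triple product is
the limit of its finite form
`∏_{j<n} (1 + z q^{2j+1}) (1 + z⁻¹ q^{2j+1}) = ∑_{|k| ≤ n} z^k q^{k²} [2n, n+k]_{q²}`,
proved by induction on `n` from the two Pascal rules for Gaussian binomials; it passes to the limit
because `(q²; q²)_n [2n, n+k]_{q²} → 1` for each fixed `k`.
-/

open Finset Filter Topology PowerSeries PowerSeries.WithPiTopology

section Elementary

variable {R ι : Type*} [CommRing R] {a : R}

theorem dvd_mul_sub_one {x y : R} (hx : a ∣ x - 1) (hy : a ∣ y - 1) : a ∣ x * y - 1 := by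
  rw [show x * y - 1 = x * (y - 1) + (x - 1) by ring]
  exact dvd_add (hy.mul_left x) hx

theorem dvd_prod_sub_one {s : Finset ι} {F : ι → R} (h : ∀ i ∈ s, a ∣ F i - 1) :
    a ∣ ∏ i ∈ s, F i - 1 :=
  prod_induction F (fun x => a ∣ x - 1) (fun _ _ => dvd_mul_sub_one) (by simp) h

theorem prod_range_two_mul {M : Type*} [CommMonoid M] (F : ℕ → M) (n : ℕ) :
    ∏ i ∈ range (2 * n), F i = ∏ j ∈ range n, F (2 * j) * F (2 * j + 1) := by
  induction n with
  | zero => simp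
  | succ n ih =>
    rw [mul_add_one, prod_range_succ, prod_range_succ, prod_range_succ, ih, mul_assoc]

theorem choose_two_succ_mul_two (n : ℕ) : (n + 1).choose 2 * 2 = (n + 1) * n := by
  simpa using (Nat.add_one_mul_choose_eq n 1).symm

end Elementary

section GaussianBinomial

variable {R : Type*} [CommRing R] (y : R)

def qPochhammer (n : ℕ) : R := ∏ i ∈ range n, (1 - y ^ (i + 1))

def qBinomial : ℕ → ℕ → R
  | _, 0 => 1
  | 0, _ + 1 => 0
  | m + 1, j + 1 => qBinomial m j + y ^ (j + 1) * qBinomial m (j + 1)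

@[simp] theorem qBinomial_zero_right (m : ℕ) : qBinomial y m 0 = 1 := by
  cases m <;> rfl

theorem qBinomial_succ_succ (m j : ℕ) :
    qBinomial y (m + 1) (j + 1) = qBinomial y m j + y ^ (j + 1) * qBinomial y m (j + 1) := rfl

theorem qBinomial_of_lt : ∀ {m j : ℕ}, m < j → qBinomial y m j = 0
  | 0, _ + 1, _ => rfl
  | m + 1, j + 1, h => by
    rw [qBinomial_succ_succ, qBinomial_of_lt (by omega), qBinomial_of_lt (by omega)]
    ring

@[simp] theorem qBinomial_self : ∀ m : ℕ, qBinomial y m m = 1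
  | 0 => rfl
  | m + 1 => by rw [qBinomial_succ_succ, qBinomial_self m, qBinomial_of_lt y (by omega)]; ring

theorem one_sub_pow_mul_qBinomial_succ :
    ∀ m j : ℕ, (1 - y ^ (j + 1)) * qBinomial y m (j + 1) = (1 - y ^ (m - j)) * qBinomial y m j
  | 0, j => by simp [qBinomial_of_lt]
  | m + 1, 0 => by
    have ih := one_sub_pow_mul_qBinomial_succ m 0
    simp only [zero_add, pow_one, Nat.sub_zero, qBinomial_zero_right, mul_one] at ih ⊢
    rw [qBinomial_succ_succ, qBinomial_zero_right]
    linear_combination y * ih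
  | m + 1, j + 1 => by
    rcases lt_or_ge j m with hjm | hjm
    · have ih₁ := one_sub_pow_mul_qBinomial_succ m j
      have ih₂ := one_sub_pow_mul_qBinomial_succ m (j + 1)
      have hexp : y ^ (j + 2) * y ^ (m - (j + 1)) = y ^ (j + 1) * y ^ (m - j) := by
        rw [← pow_add, ← pow_add]; congr 1; omega
      rw [qBinomial_succ_succ, qBinomial_succ_succ, Nat.add_sub_add_right]
      linear_combination y ^ (j + 2) * ih₂ + ih₁ - qBinomial y m (j + 1) * hexp
    · rw [qBinomial_of_lt y (by omega : m + 1 < j + 1 + 1), Nat.sub_eq_zero_of_le (by omega)]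
      ring

theorem qBinomial_succ_succ' (m j : ℕ) :
    qBinomial y (m + 1) (j + 1) = y ^ (m - j) * qBinomial y m j + qBinomial y m (j + 1) := by
  linear_combination qBinomial_succ_succ y m j - one_sub_pow_mul_qBinomial_succ y m j

theorem qBinomial_symm : ∀ {m j : ℕ}, j ≤ m → qBinomial y m (m - j) = qBinomial y m j
  | _, 0, _ => by simp
  | m + 1, j + 1, h => by
    rcases (Nat.lt_or_ge j m) with hjm | hjm
    · obtain ⟨i, hi⟩ : ∃ i, m - j = i + 1 := ⟨m - j - 1, by omega⟩
      rw [Nat.add_sub_add_right, hi, qBinomial_succ_succ', qBinomial_succ_succ,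
        show m - i = j + 1 by omega, ← hi, show i = m - (j + 1) by omega,
        qBinomial_symm (by omega : j + 1 ≤ m), qBinomial_symm (by omega : j ≤ m)]
      ring
    · obtain rfl : j = m := by omega
      simp

theorem qPochhammer_mul_qBinomial {m : ℕ} : ∀ {j : ℕ}, j ≤ m →
    qPochhammer y j * qBinomial y m j = ∏ i ∈ Ico (m - j) m, (1 - y ^ (i + 1))
  | 0, _ => by simp [qPochhammer]
  | j + 1, h => by
    rw [prod_eq_prod_Ico_succ_bot (by omega), show m - (j + 1) + 1 = m - j by omega,
      ← qPochhammer_mul_qBinomial (by omega : j ≤ m),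
      show qPochhammer y (j + 1) = qPochhammer y j * (1 - y ^ (j + 1)) from prod_range_succ _ _]
    linear_combination qPochhammer y j * one_sub_pow_mul_qBinomial_succ y m j

theorem qPochhammer_mul_qBinomial_two_mul {n k : ℕ} (hk : k ≤ n) :
    qPochhammer y n * qBinomial y (2 * n) (n + k) =
      (∏ i ∈ Ico (n - k) n, (1 - y ^ (i + 1))) *
        ∏ i ∈ Ico (n + k) (2 * n), (1 - y ^ (i + 1)) := by
  have hsymm := qBinomial_symm y (by omega : n - k ≤ 2 * n)
  rw [show 2 * n - (n - k) = n + k by omega] at hsymm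
  have htail := qPochhammer_mul_qBinomial y (by omega : n - k ≤ 2 * n)
  rw [show 2 * n - (n - k) = n + k by omega] at htail
  rw [hsymm, qPochhammer, ← prod_range_mul_prod_Ico _ (by omega : n - k ≤ n), mul_comm,
    ← mul_assoc, mul_comm _ (∏ i ∈ range (n - k), _), ← qPochhammer, htail, mul_comm]

theorem qBinomial_two_mul_add_two {n k : ℕ} (hk : k ≤ n) :
    qBinomial y (2 * n + 2) (n + k + 2) =
      (1 + y ^ (2 * n + 1)) * qBinomial y (2 * n) (n + k + 1) +
        y ^ (n - k) * qBinomial y (2 * n) (n + k) +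
          y ^ (n + k + 2) * qBinomial y (2 * n) (n + k + 2) := by
  rw [qBinomial_succ_succ, qBinomial_succ_succ', show 2 * n - (n + k) = n - k by omega,
    qBinomial_succ_succ']
  rcases hk.lt_or_eq with hk | rfl
  · have hexp : y ^ (n + k + 2) * y ^ (2 * n - (n + k + 1)) = y ^ (2 * n + 1) := by
      rw [← pow_add]; congr 1; omega
    linear_combination qBinomial y (2 * n) (n + k + 1) * hexp
  · simp only [qBinomial_of_lt y (by omega : 2 * k < k + k + 1),
      qBinomial_of_lt y (by omega : 2 * k < k + k + 2)]
    ring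

theorem qBinomial_two_mul_add_two_center (n : ℕ) :
    qBinomial y (2 * n + 2) (n + 1) =
      (1 + y ^ (2 * n + 1)) * qBinomial y (2 * n) n +
        2 * y ^ (n + 1) * qBinomial y (2 * n) (n + 1) := by
  rcases n with _ | n
  · simp [qBinomial_succ_succ, qBinomial_of_lt]
  · have hsymm := qBinomial_symm y (by omega : n ≤ 2 * (n + 1))
    rw [show 2 * (n + 1) - n = n + 2 by omega] at hsymm
    rw [qBinomial_succ_succ, qBinomial_succ_succ', qBinomial_succ_succ',
      show 2 * (n + 1) - n = n + 2 by omega, show 2 * (n + 1) - (n + 1) = n + 1 by omega, ← hsymm]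
    ring

end GaussianBinomial

section FiniteJacobi

variable {R : Type*} [CommRing R]

/-- With `u = z q` and `v = z⁻¹ q`, `(u^k + v^k) (u v)^(k.choose 2) = (z^k + z^(-k)) q^(k²)`: the
terms `±k` of the triple product. -/
def jacobiCoeff (u v : R) : ℕ → R
  | 0 => 1
  | k + 1 => (u ^ (k + 1) + v ^ (k + 1)) * (u * v) ^ (k + 1).choose 2

def jacobiHalfSum (u y : R) (n : ℕ) : R :=
  ∑ k ∈ range (n + 1), u ^ k * y ^ k.choose 2 * qBinomial y (2 * n) (n + k)

theorem jacobiHalfSum_succ {u v y : R} (huv : u * v = y) (n : ℕ) :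
    jacobiHalfSum u y (n + 1) =
      (1 + u * y ^ n) * (1 + v * y ^ n) * jacobiHalfSum u y n +
        y ^ (n + 1) * qBinomial y (2 * n) (n + 1) - v * y ^ n * qBinomial y (2 * n) n := by
  subst huv
  set t : ℕ → R := fun k => u ^ k * (u * v) ^ k.choose 2 * qBinomial (u * v) (2 * n) (n + k)
    with ht
  have hH : jacobiHalfSum u (u * v) n = ∑ k ∈ range (n + 1), t k := rfl
  have hvanish : ∀ k, n < k → t k = 0 := fun k hk => by
    simp only [ht, qBinomial_of_lt _ (by omega : 2 * n < n + k), mul_zero]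
  have hshift₁ : ∑ k ∈ range (n + 1), t (k + 1) = jacobiHalfSum u (u * v) n - t 0 := by
    rw [hH, eq_sub_iff_add_eq, ← sum_range_succ', sum_range_succ, hvanish _ (by omega), add_zero]
  have hshift₂ : ∑ k ∈ range (n + 1), t (k + 2) = jacobiHalfSum u (u * v) n - t 0 - t 1 := by
    rw [hH, sub_sub, eq_sub_iff_add_eq, add_comm (t 0), ← add_assoc]
    rw [show ∑ k ∈ range (n + 1), t (k + 2) + t 1 = ∑ k ∈ range (n + 2), t (k + 1) from
      (sum_range_succ' (fun k => t (k + 1)) (n + 1)).symm, ← sum_range_succ', sum_range_succ,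
      sum_range_succ, hvanish _ (by omega), hvanish _ (by omega), add_zero, add_zero]
  have hterm : ∀ k ∈ range (n + 1),
      u ^ (k + 1) * (u * v) ^ (k + 1).choose 2 * qBinomial (u * v) (2 * n + 2) (n + k + 2) =
        (1 + (u * v) ^ (2 * n + 1)) * t (k + 1) + u * (u * v) ^ n * t k +
          v * (u * v) ^ n * t (k + 2) := by
    intro k hk
    obtain ⟨d, rfl⟩ : ∃ d, n = k + d := ⟨n - k, by have := mem_range.mp hk; omega⟩
    have hc₁ : (k + 1).choose 2 = k.choose 2 + k := by simp [Nat.choose_succ_succ', add_comm]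
    have hc₂ : (k + 2).choose 2 = k.choose 2 + k + (k + 1) := by
      simp [Nat.choose_succ_succ', add_comm]
    rw [qBinomial_two_mul_add_two _ (by omega), Nat.add_sub_cancel_left]
    simp only [ht, hc₁, hc₂, show k + d + (k + 1) = k + d + k + 1 by ring,
      show k + d + (k + 2) = k + d + k + 2 by ring]
    ring
  rw [jacobiHalfSum, sum_range_succ']
  simp only [show ∀ k, n + 1 + (k + 1) = n + k + 2 from fun k => by ring,
    show 2 * (n + 1) = 2 * n + 2 by ring]
  rw [sum_congr rfl hterm, sum_add_distrib, sum_add_distrib, ← mul_sum, ← mul_sum, ← mul_sum,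
    hshift₁, hshift₂, ← hH, qBinomial_two_mul_add_two_center]
  simp only [ht, Nat.choose_zero_succ, show Nat.choose 1 2 = 0 from rfl, pow_zero, pow_one,
    one_mul, add_zero]
  ring

theorem sum_jacobiCoeff_mul_qBinomial (u v : R) (n : ℕ) :
    ∑ k ∈ range (n + 1), jacobiCoeff u v k * qBinomial (u * v) (2 * n) (n + k) =
      jacobiHalfSum u (u * v) n + jacobiHalfSum v (u * v) n - qBinomial (u * v) (2 * n) n := by
  simp only [jacobiHalfSum, sum_range_succ' _ n, jacobiCoeff, add_mul, sum_add_distrib]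
  simp
  ring

/-- Each half sum follows the recursion of the product up to boundary terms, and these cancel
against the central coefficient `[2n+2, n+1]`. -/
theorem finite_jacobi_triple_product (u v : R) (n : ℕ) :
    ∏ j ∈ range n, (1 + u * (u * v) ^ j) * (1 + v * (u * v) ^ j) =
      ∑ k ∈ range (n + 1), jacobiCoeff u v k * qBinomial (u * v) (2 * n) (n + k) := by
  induction n with
  | zero => simp [jacobiCoeff]
  | succ n ih =>
    rw [prod_range_succ, ih, sum_jacobiCoeff_mul_qBinomial, sum_jacobiCoeff_mul_qBinomial,
      jacobiHalfSum_succ rfl, jacobiHalfSum_succ (mul_comm v u),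
      show 2 * (n + 1) = 2 * n + 2 by ring, qBinomial_two_mul_add_two_center]
    ring

theorem jacobiCoeff_X_pow_succ (a b k : ℕ) :
    jacobiCoeff (X ^ a : R⟦X⟧) (X ^ b) (k + 1) =
      X ^ (a * (k + 1) + (a + b) * (k + 1).choose 2) +
        X ^ (b * (k + 1) + (a + b) * (k + 1).choose 2) := by
  simp only [jacobiCoeff, ← pow_add, ← pow_mul, add_mul]

end FiniteJacobi

section XAdicLimits

variable {R : Type*} [CommRing R]

theorem tendsto_order_atTop_of_X_pow_dvd {F : ℕ → R⟦X⟧} {d : ℕ → ℕ}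
    (hd : Tendsto d atTop atTop) (h : ∀ i, X ^ d i ∣ F i) :
    Tendsto (fun i => (F i).order) atTop (𝓝 ⊤) := by
  rw [ENat.tendsto_nhds_top_iff_natCast_lt]
  intro N
  filter_upwards [hd.eventually_gt_atTop N] with i hi
  exact (Nat.cast_lt.mpr hi).trans_le (nat_le_order _ _ fun m hm => X_pow_dvd_iff.mp (h i) m hm)

variable [TopologicalSpace R]

theorem tendsto_zero_of_X_pow_dvd {F : ℕ → R⟦X⟧} {d : ℕ → ℕ}
    (hd : Tendsto d atTop atTop) (h : ∀ n, X ^ d n ∣ F n) : Tendsto F atTop (𝓝 0) := by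
  rw [tendsto_iff_coeff_tendsto]
  intro N
  refine tendsto_nhds_of_eventually_eq ?_
  filter_upwards [hd.eventually_gt_atTop N] with n hn
  rw [map_zero]
  exact X_pow_dvd_iff.mp (h n) N hn

theorem summable_of_X_pow_dvd {F : ℕ → R⟦X⟧} {d : ℕ → ℕ}
    (hd : Tendsto d atTop atTop) (h : ∀ i, X ^ d i ∣ F i) : Summable F :=
  summable_of_tendsto_order_atTop_nhds_top R (tendsto_order_atTop_of_X_pow_dvd hd h)

theorem multipliable_one_add_of_X_pow_dvd {F : ℕ → R⟦X⟧} {d : ℕ → ℕ}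
    (hd : Tendsto d atTop atTop) (h : ∀ i, X ^ d i ∣ F i) : Multipliable fun i => 1 + F i :=
  multipliable_one_add_of_tendsto_order_atTop_nhds_top R (tendsto_order_atTop_of_X_pow_dvd hd h)

theorem summable_X_pow_of_le {e : ℕ → ℕ} (he : ∀ i, i ≤ e i) :
    Summable fun i => (X ^ e i : R⟦X⟧) :=
  summable_of_X_pow_dvd (tendsto_atTop_mono he tendsto_id) fun _ => dvd_rfl

theorem multipliable_one_add_X_pow_of_le {e : ℕ → ℕ} (he : ∀ i, i ≤ e i) :
    Multipliable fun i => (1 + X ^ e i : R⟦X⟧) :=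
  multipliable_one_add_of_X_pow_dvd (tendsto_atTop_mono he tendsto_id) fun _ => dvd_rfl

theorem multipliable_one_sub_X_pow_of_le {e : ℕ → ℕ} (he : ∀ i, i ≤ e i) :
    Multipliable fun i => (1 - X ^ e i : R⟦X⟧) := by
  simpa only [sub_eq_add_neg] using multipliable_one_add_of_X_pow_dvd
    (tendsto_atTop_mono he tendsto_id) fun i => (dvd_refl (X ^ e i)).neg_right

theorem tendsto_prod_range_mk {F : ℕ → R⟦X⟧} (h : ∀ i, X ^ (i + 1) ∣ F i - 1) :
    Tendsto (fun m => ∏ i ∈ range m, F i) atTop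
      (𝓝 (mk fun n => coeff n (∏ i ∈ range (n + 1), F i))) := by
  rw [tendsto_iff_coeff_tendsto]
  intro n
  refine tendsto_atTop_of_eventually_const (i₀ := n + 1) fun m hm => ?_
  have hdvd : X ^ (n + 1) ∣ ∏ i ∈ range m, F i - ∏ i ∈ range (n + 1), F i := by
    rw [← prod_range_mul_prod_Ico F hm, ← mul_sub_one]
    refine dvd_mul_of_dvd_right (dvd_prod_sub_one fun i hi => ?_) _
    exact (pow_dvd_pow X (by have := (mem_Ico.mp hi).1; omega)).trans (h i)
  rw [coeff_mk, ← sub_eq_zero, ← map_sub]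
  exact X_pow_dvd_iff.mp hdvd n (by omega)

theorem tendsto_jacobi_triple_product [IsTopologicalRing R] {u v : R⟦X⟧} (hu : X ∣ u)
    (hv : X ∣ v) :
    Tendsto (fun n => qPochhammer (u * v) n *
        ∏ j ∈ range n, (1 + u * (u * v) ^ j) * (1 + v * (u * v) ^ j))
      atTop (𝓝 (∑' k, jacobiCoeff u v k)) := by
  have hcoeff : ∀ k, X ^ k ∣ jacobiCoeff u v k
    | 0 => by simp
    | k + 1 => dvd_mul_of_dvd_left (dvd_add (pow_dvd_pow_of_dvd hu _) (pow_dvd_pow_of_dvd hv _)) _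
  have htail : ∀ n k, k ≤ n →
      X ^ (n - k + 1) ∣ qPochhammer (u * v) n * qBinomial (u * v) (2 * n) (n + k) - 1 := by
    intro n k hk
    have hfactor : ∀ i, n - k ≤ i → X ^ (n - k + 1) ∣ (1 - (u * v) ^ (i + 1)) - 1 := by
      intro i hi
      rw [sub_sub_cancel_left, dvd_neg]
      exact (pow_dvd_pow X (by omega)).trans (pow_dvd_pow_of_dvd (dvd_mul_of_dvd_left hu v) _)
    rw [qPochhammer_mul_qBinomial_two_mul _ hk]
    exact dvd_mul_sub_one (dvd_prod_sub_one fun i hi => hfactor i (mem_Ico.mp hi).1)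
      (dvd_prod_sub_one fun i hi => hfactor i (by have := (mem_Ico.mp hi).1; omega))
  have hsum := ((summable_of_X_pow_dvd tendsto_id hcoeff).hasSum.tendsto_sum_nat).comp
    (tendsto_add_atTop_nat 1)
  have herror : Tendsto (fun n => ∑ k ∈ range (n + 1), jacobiCoeff u v k *
      (qPochhammer (u * v) n * qBinomial (u * v) (2 * n) (n + k) - 1)) atTop (𝓝 0) := by
    refine tendsto_zero_of_X_pow_dvd (Nat.tendsto_div_const_atTop two_ne_zero) fun n =>
      dvd_sum fun k hk => ?_
    have hk := mem_range.mp hk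
    rcases le_or_gt (n / 2) k with h | h
    · exact dvd_mul_of_dvd_left ((pow_dvd_pow X h).trans (hcoeff k)) _
    · exact dvd_mul_of_dvd_right ((pow_dvd_pow X (by omega)).trans (htail n k (by omega))) _
  rw [← add_zero (∑' k, jacobiCoeff u v k)]
  refine (hsum.add herror).congr fun n => ?_
  simp only [Function.comp_apply, finite_jacobi_triple_product, mul_sum, ← sum_add_distrib]
  exact sum_congr rfl fun k _ => by ring

end XAdicLimits

section Overpartitions

theorem hasProd_f {r : ℕ} (hr : 0 < r) : HasProd (fun i => 1 - X ^ (r * (i + 1))) (f r) := by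
  have hP := (multipliable_one_sub_X_pow_of_le (R := ℤ) (e := fun i => r * (i + 1))
    fun i => by nlinarith).hasProd
  have hlim := tendsto_prod_range_mk (F := fun i => (1 - X ^ (r * (i + 1)) : ℤ⟦X⟧)) fun i => by
    rw [sub_sub_cancel_left, dvd_neg]
    exact pow_dvd_pow X (Nat.le_mul_of_pos_left _ hr)
  rw [tendsto_nhds_unique hP.tendsto_prod_nat hlim] at hP
  exact hP

theorem isUnit_f {r : ℕ} (hr : 0 < r) : IsUnit (f r) := by
  rw [isUnit_iff_constantCoeff, ← coeff_zero_eq_constantCoeff_apply, f, coeff_mk]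
  simp [hr.ne']

/-- `(-q^r; q^{2r})_∞`. -/
noncomputable def prodOneAddOdd (r : ℕ) : ℤ⟦X⟧ := ∏' i, (1 + X ^ (r * (2 * i + 1)))

/-- `(q^r; q^{2r})_∞`. -/
noncomputable def prodOneSubOdd (r : ℕ) : ℤ⟦X⟧ := ∏' i, (1 - X ^ (r * (2 * i + 1)))

theorem hasProd_prodOneAddOdd {r : ℕ} (hr : 0 < r) :
    HasProd (fun i => 1 + X ^ (r * (2 * i + 1))) (prodOneAddOdd r) :=
  (multipliable_one_add_X_pow_of_le fun i => by nlinarith).hasProd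

theorem hasProd_prodOneSubOdd {r : ℕ} (hr : 0 < r) :
    HasProd (fun i => 1 - X ^ (r * (2 * i + 1))) (prodOneSubOdd r) :=
  (multipliable_one_sub_X_pow_of_le fun i => by nlinarith).hasProd

theorem prodOneAddOdd_mul_prodOneSubOdd {r : ℕ} (hr : 0 < r) :
    prodOneAddOdd r * prodOneSubOdd r = prodOneSubOdd (2 * r) := by
  refine ((hasProd_prodOneAddOdd hr).mul (hasProd_prodOneSubOdd hr)).unique ?_
  convert hasProd_prodOneSubOdd (by omega : 0 < 2 * r) using 2 with i
  ring

theorem f_eq_prodOneSubOdd_mul {r : ℕ} (hr : 0 < r) : f r = prodOneSubOdd r * f (2 * r) := by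
  have hodd : HasProd (fun k => (1 - X ^ (r * (2 * k + 1 + 1)) : ℤ⟦X⟧)) (f (2 * r)) := by
    convert hasProd_f (by omega : 0 < 2 * r) using 4 with k
    ring
  exact (hasProd_f hr).unique
    ((hasProd_prodOneSubOdd hr).even_mul_odd (f := fun i => 1 - X ^ (r * (i + 1))) hodd)

theorem prodOneAddOdd_mul_f_mul_f {r : ℕ} (hr : 0 < r) :
    prodOneAddOdd r * f r * f (4 * r) = f (2 * r) ^ 2 := by
  have h₂ := f_eq_prodOneSubOdd_mul (by omega : 0 < 2 * r)
  rw [show 2 * (2 * r) = 4 * r by ring] at h₂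
  rw [f_eq_prodOneSubOdd_mul hr, h₂, ← prodOneAddOdd_mul_prodOneSubOdd hr]
  ring

/-- Ramanujan's `φ(q^r) = ∑_{k ∈ ℤ} q^{r k²}`. -/
noncomputable def ramanujanPhi (r : ℕ) : ℤ⟦X⟧ := 1 + 2 * ∑' k, X ^ (r * (k + 1) ^ 2)

/-- Ramanujan's `ψ(q^r) = ∑_{k ≥ 0} q^{r k (k + 1) / 2}`. -/
noncomputable def ramanujanPsi (r : ℕ) : ℤ⟦X⟧ := ∑' k, X ^ (r * (k + 1).choose 2)

theorem tsum_jacobiCoeff_X_pow_X_pow {r : ℕ} (hr : 0 < r) :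
    ∑' k, jacobiCoeff (X ^ r : ℤ⟦X⟧) (X ^ r) k = ramanujanPhi r := by
  have hterm : ∀ k, jacobiCoeff (X ^ r : ℤ⟦X⟧) (X ^ r) (k + 1) = 2 * X ^ (r * (k + 1) ^ 2) := by
    intro k
    have := choose_two_succ_mul_two k
    rw [jacobiCoeff_X_pow_succ, ← two_mul,
      show r * (k + 1) + (r + r) * (k + 1).choose 2 = r * (k + 1) ^ 2 by nlinarith]
  have hsum : Summable fun k => (X ^ (r * (k + 1) ^ 2) : ℤ⟦X⟧) :=
    summable_X_pow_of_le fun k => by nlinarith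
  rw [tsum_eq_zero_add' (by simpa only [hterm] using hsum.mul_left 2)]
  simp only [hterm, hsum.tsum_mul_left]
  rfl

theorem tsum_jacobiCoeff_X_pow_X_pow_three_mul {r : ℕ} (hr : 0 < r) :
    ∑' k, jacobiCoeff (X ^ r : ℤ⟦X⟧) (X ^ (3 * r)) k = ramanujanPsi r := by
  have hterm : ∀ k, jacobiCoeff (X ^ r : ℤ⟦X⟧) (X ^ (3 * r)) (k + 1) =
      X ^ (r * (2 * k + 1 + 1).choose 2) + X ^ (r * (2 * k + 1 + 1 + 1).choose 2) := by
    intro k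
    have h₁ := choose_two_succ_mul_two k
    have h₂ := choose_two_succ_mul_two (2 * k + 1)
    have h₃ := choose_two_succ_mul_two (2 * k + 2)
    rw [jacobiCoeff_X_pow_succ,
      show r * (k + 1) + (r + 3 * r) * (k + 1).choose 2 = r * (2 * k + 1 + 1).choose 2 by nlinarith,
      show 3 * r * (k + 1) + (r + 3 * r) * (k + 1).choose 2 = r * (2 * k + 1 + 1 + 1).choose 2 by
        nlinarith]
  have hle : ∀ k, k ≤ r * (k + 1).choose 2 := fun k =>
    (by nlinarith [choose_two_succ_mul_two k] : k ≤ (k + 1).choose 2).trans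
      (Nat.le_mul_of_pos_left _ hr)
  have heven : Summable fun k => (X ^ (r * (2 * k + 1 + 1).choose 2) : ℤ⟦X⟧) :=
    summable_X_pow_of_le fun k => by linarith [hle (2 * k + 1)]
  have hodd : Summable fun k => (X ^ (r * (2 * k + 1 + 1 + 1).choose 2) : ℤ⟦X⟧) :=
    summable_X_pow_of_le fun k => by linarith [hle (2 * k + 2)]
  have htail : Summable fun k => (X ^ (r * (k + 1 + 1).choose 2) : ℤ⟦X⟧) :=
    summable_X_pow_of_le fun k => by linarith [hle (k + 1)]
  rw [tsum_eq_zero_add' (f := jacobiCoeff _ _) (by simpa only [hterm] using heven.add hodd),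
    ramanujanPsi, tsum_eq_zero_add' (f := fun k => X ^ (r * (k + 1).choose 2)) htail,
    ← tsum_even_add_odd (f := fun k => X ^ (r * (k + 1 + 1).choose 2)) heven hodd,
    ← heven.tsum_add hodd]
  rw [zero_add, Nat.choose_eq_zero_of_lt one_lt_two, mul_zero, pow_zero]
  simp only [hterm]
  rfl

theorem ramanujanPhi_one_eq : ramanujanPhi 1 = ramanujanPhi 4 + 2 * X * ramanujanPsi 8 := by
  have hodd : ∀ k, (X ^ (1 * (2 * k + 1) ^ 2) : ℤ⟦X⟧) = X * X ^ (8 * (k + 1).choose 2) := by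
    intro k
    rw [← pow_succ', show 1 * (2 * k + 1) ^ 2 = 8 * (k + 1).choose 2 + 1 by
      nlinarith [choose_two_succ_mul_two k]]
  have heven : ∀ k, (X ^ (1 * (2 * k + 1 + 1) ^ 2) : ℤ⟦X⟧) = X ^ (4 * (k + 1) ^ 2) := by
    intro k
    rw [show 1 * (2 * k + 1 + 1) ^ 2 = 4 * (k + 1) ^ 2 by ring]
  have hsumOdd : Summable fun k => (X ^ (1 * (2 * k + 1) ^ 2) : ℤ⟦X⟧) :=
    summable_X_pow_of_le fun k => by nlinarith
  have hsumEven : Summable fun k => (X ^ (1 * (2 * k + 1 + 1) ^ 2) : ℤ⟦X⟧) :=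
    summable_X_pow_of_le fun k => by nlinarith
  have hsumPsi : Summable fun k => (X ^ (8 * (k + 1).choose 2) : ℤ⟦X⟧) :=
    summable_X_pow_of_le fun k => by nlinarith [choose_two_succ_mul_two k]
  rw [ramanujanPhi, ramanujanPhi, ramanujanPsi,
    ← tsum_even_add_odd (f := fun k => X ^ (1 * (k + 1) ^ 2)) hsumOdd hsumEven]
  simp only [hodd, heven, hsumPsi.tsum_mul_left]
  ring

theorem f_two_mul_mul_prodOneAddOdd_sq {r : ℕ} (hr : 0 < r) :
    f (2 * r) * prodOneAddOdd r ^ 2 = ramanujanPhi r := by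
  rw [← tsum_jacobiCoeff_X_pow_X_pow hr]
  have hX : (X : ℤ⟦X⟧) ∣ X ^ r := dvd_pow_self X hr.ne'
  refine tendsto_nhds_unique ((hasProd_f (by omega : 0 < 2 * r)).tendsto_prod_nat.mul
    ((hasProd_prodOneAddOdd hr).tendsto_prod_nat.pow 2))
    ((tendsto_jacobi_triple_product hX hX).congr fun n => ?_)
  simp only [qPochhammer, sq, ← prod_mul_distrib]
  exact prod_congr rfl fun i _ => by ring

theorem f_four_mul_mul_prodOneAddOdd {r : ℕ} (hr : 0 < r) :
    f (4 * r) * prodOneAddOdd r = ramanujanPsi r := by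
  rw [← tsum_jacobiCoeff_X_pow_X_pow_three_mul hr]
  have htwo : Tendsto (2 * ·) atTop atTop :=
    tendsto_atTop_mono (fun n => Nat.le_mul_of_pos_left n two_pos) tendsto_id
  refine tendsto_nhds_unique ((hasProd_f (by omega : 0 < 4 * r)).tendsto_prod_nat.mul
    ((hasProd_prodOneAddOdd hr).tendsto_prod_nat.comp htwo))
    ((tendsto_jacobi_triple_product (dvd_pow_self X hr.ne') (dvd_pow_self X (by omega))).congr
      fun n => ?_)
  simp only [qPochhammer, Function.comp_apply, prod_range_two_mul, ← prod_mul_distrib]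
  exact prod_congr rfl fun i _ => by ring

theorem ramanujanPhi_mul_f_sq {r : ℕ} (hr : 0 < r) :
    ramanujanPhi r * (f r ^ 2 * f (4 * r) ^ 2) = f (2 * r) ^ 5 := by
  rw [← f_two_mul_mul_prodOneAddOdd_sq hr]
  linear_combination (f (2 * r) * (prodOneAddOdd r * f r * f (4 * r) + f (2 * r) ^ 2)) *
    prodOneAddOdd_mul_f_mul_f hr

theorem ramanujanPsi_mul_f {r : ℕ} (hr : 0 < r) : ramanujanPsi r * f r = f (2 * r) ^ 2 := by
  rw [← f_four_mul_mul_prodOneAddOdd hr]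
  linear_combination prodOneAddOdd_mul_f_mul_f hr

theorem overpartition_two_dissection_mul :
    f 2 ^ 5 * f 8 * f 16 ^ 2 = f 1 ^ 2 * f 8 ^ 6 + 2 * X * (f 1 ^ 2 * f 4 ^ 2 * f 16 ^ 4) := by
  have h₁ := ramanujanPhi_mul_f_sq (r := 1) (by norm_num)
  have h₄ := ramanujanPhi_mul_f_sq (r := 4) (by norm_num)
  have h₈ := ramanujanPsi_mul_f (r := 8) (by norm_num)
  norm_num at h₁ h₄ h₈
  linear_combination (-(f 8 * f 16 ^ 2)) * h₁ + (f 1 ^ 2 * f 8) * h₄ +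
    (2 * X * f 1 ^ 2 * f 4 ^ 2 * f 16 ^ 2) * h₈ +
    (f 1 ^ 2 * f 4 ^ 2 * f 8 * f 16 ^ 2) * ramanujanPhi_one_eq

end Overpartitions

/-- The 2-dissection of the overpartition generating function:
`f_2 / f_1^2 = f_8^5 / (f_2^4 f_16^2) + 2 q f_4^2 f_16^2 / (f_2^4 f_8)` in `ℤ[[q]]`.
All denominators are units (constant term `1`), and `Ring.inverse` gives their inverses. -/
theorem overpartition_two_dissection :
    f 2 * Ring.inverse (f 1 ^ 2) =
      f 8 ^ 5 * Ring.inverse (f 2 ^ 4 * f 16 ^ 2) +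
        2 * PowerSeries.X * (f 4 ^ 2 * f 16 ^ 2 * Ring.inverse (f 2 ^ 4 * f 8)) := by
  have hu₁ := (isUnit_f one_pos).pow 2
  have hu₂ := ((isUnit_f two_pos).pow 4).mul ((isUnit_f (by norm_num : 0 < 16)).pow 2)
  have hu₃ := ((isUnit_f two_pos).pow 4).mul (isUnit_f (by norm_num : 0 < 8))
  refine (hu₁.mul (hu₂.mul hu₃)).mul_right_cancel ?_
  linear_combination
    (f 2 * (f 2 ^ 4 * f 16 ^ 2) * (f 2 ^ 4 * f 8)) * Ring.mul_inverse_cancel _ hu₁ -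
    (f 8 ^ 5 * f 1 ^ 2 * (f 2 ^ 4 * f 8)) * Ring.mul_inverse_cancel _ hu₂ -
    (2 * PowerSeries.X * (f 4 ^ 2 * f 16 ^ 2) * f 1 ^ 2 * (f 2 ^ 4 * f 16 ^ 2)) *
      Ring.mul_inverse_cancel _ hu₃ + f 2 ^ 4 * overpartition_two_dissection_mul
end

section
/- Let x, y, u, v be complex numbers satisfying u + v = xy and uv = x² + y² − 4. Then in ℂ[[q]]: (1 + 2∑_{n≥1} T_{4n}(x/2) q^{2n²})·(1 + 2∑_{n≥1} T_{4n}(y/2) q^{2n²}) = (1 + 2∑_{n≥1} T_{4n}(u/2) q^{4n²})·(1 + 2∑_{n≥1} T_{4n}(v/2) q^{4n²}) + 4q²·(∑_{n≥1} T_{4n−2}(u/2) q^{4n²−4n})·(∑_{n≥1} T_{4n−2}(v/2) q^{4n²−4n}). -/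
/-!
Write `x = a + a⁻¹`, `y = d + d⁻¹`. Since `2 T_n((a + a⁻¹)/2) = aⁿ + a⁻ⁿ`, the series
`1 + 2∑ T_{4n}(x/2) q^{c n²}` is the two-sided theta series `∑_{m ∈ ℤ} a^{4m} q^{c m²}`, and
`2q ∑ T_{4n-2}(x/2) q^{4n²-4n}` is `∑_{m ∈ ℤ} a^{2(2m+1)} q^{(2m+1)²}`. The left-hand side is
then a sum over `(s, t) ∈ ℤ²`, and `(s, t) ↦ (s + t, s - t)` maps `ℤ²` onto the pairs of equal
parity, with `2s² + 2t² = (s + t)² + (s - t)²` and `a^{4s} d^{4t} = (ad)^{2(s+t)} (a/d)^{2(s-t)}`: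
even pairs give the first product on the right with `u = ad + (ad)⁻¹`, `v = a/d + (a/d)⁻¹`,
odd pairs the second. These `u, v` are exactly the roots of `w² - xy w + x² + y² - 4`.
-/

/-- The formal power series `∑_{n ≥ 1} c(n) q^{e(n)}` in `ℂ[[q]]`, defined coefficientwise.
(For each exponent function `e` used here, any `n ≥ 1` with `e n = k` satisfies `n ≤ k + 1`,
so the truncated range captures every term.) -/
noncomputable def mkSum (e : ℕ → ℕ) (c : ℕ → ℂ) : PowerSeries ℂ :=
  PowerSeries.mk fun k => ∑ n ∈ Finset.range (k + 2), if 1 ≤ n ∧ e n = k then c n else 0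

open Polynomial.Chebyshev (T)

theorem Polynomial.Chebyshev.two_mul_T_eval_add_inv_div_two {K : Type*} [Field K]
    [NeZero (2 : K)] {a : K} (ha : a ≠ 0) (n : ℤ) :
    2 * (T K n).eval ((a + a⁻¹) / 2) = a ^ n + a ^ (-n) := by
  set z := (a + a⁻¹) / 2
  have hz : 2 * z = a + a⁻¹ := mul_div_cancel₀ _ two_ne_zero
  induction n using Polynomial.Chebyshev.induct' with
  | zero => norm_num
  | one => simpa using hz
  | add_two n ih1 ih2 =>
    have hrec : 2 * (T K (n + 2)).eval z =
        (a + a⁻¹) * (2 * (T K (n + 1)).eval z) - 2 * (T K n).eval z := by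
      rw [T_add_two, ← hz]
      simp only [Polynomial.eval_sub, Polynomial.eval_mul, Polynomial.eval_X,
        Polynomial.eval_ofNat]
      ring
    rw [hrec, ih1, ih2]
    simp only [neg_add, zpow_add₀ ha, zpow_neg, zpow_natCast, zpow_ofNat]
    field_simp
    ring
  | neg n ih => rw [T_neg, ih, neg_neg, add_comm]

open Polynomial in
theorem IsAlgClosed.exists_add_inv_eq {K : Type*} [Field K] [IsAlgClosed K] (x : K) :
    ∃ a : K, a ≠ 0 ∧ a + a⁻¹ = x := by
  have hdeg : (X ^ 2 - C x * X + 1 : K[X]).degree = 2 := by compute_degree!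
  obtain ⟨a, ha⟩ := IsAlgClosed.exists_root _ (by rw [hdeg]; exact two_ne_zero)
  simp only [IsRoot, eval_add, eval_sub, eval_mul, eval_pow, eval_X, eval_C, eval_one] at ha
  have ha0 : a ≠ 0 := by rintro rfl; simp at ha
  refine ⟨a, ha0, ?_⟩
  field_simp
  linear_combination ha

theorem eq_and_eq_or_eq_and_eq_of_add_eq_add_of_mul_eq_mul {R : Type*} [CommRing R] [IsDomain R]
    {u v U V : R} (hs : u + v = U + V) (hp : u * v = U * V) :
    u = U ∧ v = V ∨ u = V ∧ v = U := by
  have h : (u - U) * (u - V) = 0 := by linear_combination u * hs - hp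
  rcases mul_eq_zero.mp h with h | h
  · exact .inl ⟨by linear_combination h, by linear_combination hs - h⟩
  · exact .inr ⟨by linear_combination h, by linear_combination hs - h⟩

theorem Int.natAbs_add_sq_add_natAbs_sub_sq (s t : ℤ) :
    (s + t).natAbs ^ 2 + (s - t).natAbs ^ 2 = 2 * s.natAbs ^ 2 + 2 * t.natAbs ^ 2 := by
  zify
  simp only [sq_abs]
  ring

theorem mul_zpow_mul_div_zpow {K : Type*} [Field K] {a d : K} (ha : a ≠ 0) (hd : d ≠ 0)
    (m n : ℤ) : (a * d) ^ m * (a / d) ^ n = a ^ (m + n) * d ^ (m - n) := by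
  rw [mul_zpow, div_zpow, zpow_add₀ ha, zpow_sub₀ hd]
  ring

def Int.sumDiffEquiv : (ℤ × ℤ) ⊕ (ℤ × ℤ) ≃ ℤ × ℤ where
  toFun := Sum.elim (fun p => (p.1 + p.2, p.1 - p.2)) (fun p => (p.1 + p.2 + 1, p.1 - p.2))
  invFun p := if Even (p.1 + p.2) then .inl ((p.1 + p.2) / 2, (p.1 - p.2) / 2)
    else .inr ((p.1 + p.2) / 2, (p.1 - p.2) / 2)
  left_inv := by
    rintro (⟨i, j⟩ | ⟨i, j⟩)
    · have h : Even (i + j + (i - j)) := ⟨i, by ring⟩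
      simp only [Sum.elim_inl, h, if_true, Sum.inl.injEq, Prod.mk.injEq]
      omega
    · have h : ¬Even (i + j + 1 + (i - j)) := Int.not_even_iff_odd.mpr ⟨i, by ring⟩
      simp only [Sum.elim_inr, h, if_false, Sum.inr.injEq, Prod.mk.injEq]
      omega
  right_inv := by
    rintro ⟨s, t⟩
    by_cases h : Even (s + t) <;>
      simp only [h, if_true, if_false, Sum.elim_inl, Sum.elim_inr, Prod.mk.injEq] <;>
      rw [Int.even_iff] at h <;> omega

open PowerSeries PowerSeries.WithPiTopology

theorem PowerSeries.X_mul_monomial {R : Type*} [Semiring R] (k : ℕ) (z : R) :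
    X * monomial k z = monomial (k + 1) z := by
  rw [X_eq, monomial_mul_monomial, one_mul, add_comm]

section MonomialSums

variable {R : Type*} [Semiring R] [UniformSpace R] {ι κ : Type*}

theorem summable_monomial {e : ι → ℕ} (he : ∀ k, {i | e i ≤ k}.Finite) (c : ι → R) :
    Summable fun i => monomial (e i) (c i) := by
  refine (summable_iff_summable_coeff _).mpr fun k =>
    summable_of_hasFiniteSupport ((he k).subset fun i hi => ?_)
  simp only [Function.mem_support, coeff_monomial, ne_eq, ite_eq_right_iff, not_forall] at hi
  exact hi.1.ge

theorem HasSum.mul_monomial [IsTopologicalSemiring R] [T0Space R] {e : ι → ℕ} {e' : κ → ℕ}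
    (he : ∀ k, {i | e i ≤ k}.Finite) (he' : ∀ k, {j | e' j ≤ k}.Finite) {c : ι → R}
    {c' : κ → R} {F G : PowerSeries R} (hF : HasSum (fun i => monomial (e i) (c i)) F)
    (hG : HasSum (fun j => monomial (e' j) (c' j)) G) :
    HasSum (fun p : ι × κ => monomial (e p.1 + e' p.2) (c p.1 * c' p.2)) (F * G) := by
  have hsum : Summable fun p : ι × κ => monomial (e p.1 + e' p.2) (c p.1 * c' p.2) := by
    refine summable_monomial (fun k => ((he k).prod (he' k)).subset fun p hp => ?_) _
    exact ⟨le_trans (Nat.le_add_right _ _) hp, le_trans (Nat.le_add_left _ _) hp⟩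
  simp only [← monomial_mul_monomial] at hsum ⊢
  exact HasSum.mul (f := fun i => monomial (e i) (c i)) (g := fun j => monomial (e' j) (c' j))
    hF hG hsum

end MonomialSums

theorem Int.finite_setOf_le_of_natAbs_le {e : ℤ → ℕ} (he : ∀ m, m.natAbs ≤ e m) (k : ℕ) :
    {m | e m ≤ k}.Finite :=
  (Set.finite_Icc (-k : ℤ) k).subset fun m hm => by
    have := he m
    simp only [Set.mem_ofPred_eq, Set.mem_Icc] at hm ⊢
    omega

theorem hasSum_mkSum {e : ℕ → ℕ} (he : ∀ n, n ≤ e (n + 1)) (c : ℕ → ℂ) :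
    HasSum (fun n => monomial (e (n + 1)) (c (n + 1))) (mkSum e c) := by
  refine (hasSum_iff_hasSum_coeff _).mpr fun k => ?_
  rw [mkSum, coeff_mk, Finset.sum_range_succ']
  simp only [coeff_monomial, Nat.le_add_left, true_and, Nat.one_le_iff_ne_zero, ne_eq,
    not_true_eq_false, false_and, if_false, add_zero, eq_comm (a := k)]
  refine hasSum_sum_of_ne_finset_zero fun n hn => if_neg fun h => hn ?_
  have := he n
  simp only [Finset.mem_range]
  omega

theorem mkSum_add (e : ℕ → ℕ) (c c' : ℕ → ℂ) :
    mkSum e c + mkSum e c' = mkSum e (c + c') := by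
  ext k
  simp only [mkSum, map_add, coeff_mk, ← Finset.sum_add_distrib, Pi.add_apply, ite_add_ite,
    add_zero]

theorem C_mul_mkSum (z : ℂ) (e : ℕ → ℕ) (c : ℕ → ℂ) :
    C z * mkSum e c = mkSum e (z • c) := by
  ext k
  simp only [mkSum, coeff_C_mul, coeff_mk, Finset.mul_sum, mul_ite, mul_zero, Pi.smul_apply,
    smul_eq_mul]

theorem hasSum_theta {a : ℂ} (ha : a ≠ 0) {c : ℕ} (hc : 0 < c) (r : ℤ) :
    HasSum (fun m : ℤ => monomial (c * m.natAbs ^ 2) (a ^ (r * m)))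
      (1 + 2 * mkSum (fun n => c * n ^ 2) fun n => (T ℂ (r * n)).eval ((a + a⁻¹) / 2)) := by
  set e : ℕ → ℕ := fun n => c * n ^ 2
  have he : ∀ n, n ≤ e (n + 1) := fun n => by simp only [e]; nlinarith
  have hpos : HasSum (fun n : ℕ => monomial (c * ((n : ℤ) + 1).natAbs ^ 2)
      (a ^ (r * ((n : ℤ) + 1)))) (mkSum e fun n => a ^ (r * n)) :=
    (hasSum_mkSum he _).congr_fun fun n => by push_cast; rfl
  have hneg : HasSum (fun n : ℕ => monomial (c * (-((n : ℤ) + 1)).natAbs ^ 2)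
      (a ^ (r * -((n : ℤ) + 1)))) (mkSum e fun n => a ^ (-(r * n))) :=
    (hasSum_mkSum he _).congr_fun fun n => by rw [Int.natAbs_neg, mul_neg]; push_cast; rfl
  have hsum : 2 * mkSum e (fun n => (T ℂ (r * n)).eval ((a + a⁻¹) / 2)) =
      mkSum e (fun n => a ^ (r * n)) + mkSum e (fun n => a ^ (-(r * n))) := by
    rw [← map_ofNat C, C_mul_mkSum, mkSum_add]
    congr 1
    funext n
    exact Polynomial.Chebyshev.two_mul_T_eval_add_inv_div_two ha _
  have := HasSum.of_add_one_of_neg_add_one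
    (f := fun m : ℤ => monomial (c * m.natAbs ^ 2) (a ^ (r * m))) hpos hneg
  convert this using 1
  simp only [hsum, Int.natAbs_zero, ne_eq, two_ne_zero, not_false_eq_true, zero_pow, mul_zero,
    zpow_zero, monomial_zero_eq_C, map_one]
  ring

theorem hasSum_oddTheta {b : ℂ} (hb : b ≠ 0) :
    HasSum (fun m : ℤ => monomial ((2 * m + 1).natAbs ^ 2) (b ^ (2 * (2 * m + 1))))
      (2 * X * mkSum (fun n => 4 * n ^ 2 - 4 * n) fun n =>
        (T ℂ (4 * n - 2)).eval ((b + b⁻¹) / 2)) := by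
  set e : ℕ → ℕ := fun n => 4 * n ^ 2 - 4 * n
  have hexp : ∀ n, e (n + 1) + 1 = (2 * n + 1) ^ 2 := fun n => by
    have h1 : 4 * (n + 1) ^ 2 = 4 * (n + 1) + (4 * n ^ 2 + 4 * n) := by ring
    have h2 : (2 * n + 1) ^ 2 = 4 * n ^ 2 + 4 * n + 1 := by ring
    simp only [e]
    omega
  have he : ∀ n, n ≤ e (n + 1) := fun n => by nlinarith [hexp n]
  have hpos : HasSum (fun n : ℕ => monomial ((2 * (n : ℤ) + 1).natAbs ^ 2)
      (b ^ (2 * (2 * (n : ℤ) + 1)))) (X * mkSum e fun n => b ^ (2 * (2 * (n : ℤ) - 1))) :=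
    ((hasSum_mkSum he _).mul_left X).congr_fun fun n => by
      rw [X_mul_monomial, hexp]
      congr 2
      omega
  have hneg : HasSum (fun n : ℕ => monomial ((2 * -((n : ℤ) + 1) + 1).natAbs ^ 2)
      (b ^ (2 * (2 * -((n : ℤ) + 1) + 1))))
      (X * mkSum e fun n => b ^ (-(2 * (2 * (n : ℤ) - 1)))) :=
    ((hasSum_mkSum he _).mul_left X).congr_fun fun n => by
      rw [X_mul_monomial, hexp]
      congr 2
      omega
  have hsum : 2 * X * mkSum e (fun n => (T ℂ (4 * n - 2)).eval ((b + b⁻¹) / 2)) =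
      X * mkSum e (fun n => b ^ (2 * (2 * (n : ℤ) - 1))) +
        X * mkSum e (fun n => b ^ (-(2 * (2 * (n : ℤ) - 1)))) := by
    rw [mul_comm 2 X, mul_assoc, ← mul_add, ← map_ofNat C, C_mul_mkSum, mkSum_add]
    congr 2
    funext n
    rw [Pi.smul_apply, Pi.add_apply, smul_eq_mul,
      Polynomial.Chebyshev.two_mul_T_eval_add_inv_div_two hb]
    ring_nf
  rw [hsum]
  exact HasSum.of_nat_of_neg_add_one
    (f := fun m : ℤ => monomial ((2 * m + 1).natAbs ^ 2) (b ^ (2 * (2 * m + 1)))) hpos hneg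

noncomputable def chebyTheta (c : ℕ) (z : ℂ) : PowerSeries ℂ :=
  1 + 2 * mkSum (fun n => c * n ^ 2) fun n => (T ℂ (4 * n)).eval (z / 2)

noncomputable def chebyThetaOdd (z : ℂ) : PowerSeries ℂ :=
  mkSum (fun n => 4 * n ^ 2 - 4 * n) fun n => (T ℂ (4 * n - 2)).eval (z / 2)

theorem chebyTheta_mul_chebyTheta {a d : ℂ} (ha : a ≠ 0) (hd : d ≠ 0) :
    chebyTheta 2 (a + a⁻¹) * chebyTheta 2 (d + d⁻¹) =
      chebyTheta 4 (a * d + (a * d)⁻¹) * chebyTheta 4 (a / d + (a / d)⁻¹) +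
        4 * X ^ 2 *
          (chebyThetaOdd (a * d + (a * d)⁻¹) * chebyThetaOdd (a / d + (a / d)⁻¹)) := by
  have hb : a * d ≠ 0 := mul_ne_zero ha hd
  have hc : a / d ≠ 0 := div_ne_zero ha hd
  have hfin : ∀ c, 0 < c → ∀ k, {m : ℤ | c * m.natAbs ^ 2 ≤ k}.Finite := fun c hc0 =>
    Int.finite_setOf_le_of_natAbs_le fun m =>
      (Nat.le_self_pow two_ne_zero _).trans (Nat.le_mul_of_pos_left _ hc0)
  have hfinOdd : ∀ k, {m : ℤ | (2 * m + 1).natAbs ^ 2 ≤ k}.Finite :=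
    Int.finite_setOf_le_of_natAbs_le fun m =>
      (show m.natAbs ≤ (2 * m + 1).natAbs by omega).trans (Nat.le_self_pow two_ne_zero _)
  have hL := (hasSum_theta ha two_pos 4).mul_monomial (hfin 2 two_pos) (hfin 2 two_pos)
    (hasSum_theta hd two_pos 4)
  have hEven := (hasSum_theta hb four_pos 4).mul_monomial (hfin 4 four_pos) (hfin 4 four_pos)
    (hasSum_theta hc four_pos 4)
  have hOdd := (hasSum_oddTheta hb).mul_monomial hfinOdd hfinOdd (hasSum_oddTheta hc)
  have hR := (Int.sumDiffEquiv.hasSum_iff (f := fun p : ℤ × ℤ =>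
      monomial (2 * p.1.natAbs ^ 2 + 2 * p.2.natAbs ^ 2) (a ^ (4 * p.1) * d ^ (4 * p.2)))).mp
    (HasSum.sum (hEven.congr_fun fun ⟨i, j⟩ => ?_) (hOdd.congr_fun fun ⟨i, j⟩ => ?_))
  · unfold chebyTheta chebyThetaOdd
    rw [hL.unique hR]
    ring
  · simp only [Function.comp_apply, Int.sumDiffEquiv, Equiv.coe_fn_mk, Sum.elim_inl]
    rw [mul_zpow_mul_div_zpow ha hd]
    congr 1
    · congr 1
      have := Int.natAbs_add_sq_add_natAbs_sub_sq i j
      omega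
    · ring_nf
  · simp only [Function.comp_apply, Int.sumDiffEquiv, Equiv.coe_fn_mk, Sum.elim_inr]
    rw [mul_zpow_mul_div_zpow ha hd]
    congr 1
    · congr 1
      have := Int.natAbs_add_sq_add_natAbs_sub_sq (i + j + 1) (i - j)
      rw [show i + j + 1 + (i - j) = 2 * i + 1 by ring,
        show i + j + 1 - (i - j) = 2 * j + 1 by ring] at this
      omega
    · ring_nf

/-- If complex numbers `x, y, u, v` satisfy `u + v = xy` and `uv = x² + y² - 4`, then in `ℂ[[q]]`:
`(1 + 2∑ T_{4n}(x/2) q^{2n²})(1 + 2∑ T_{4n}(y/2) q^{2n²})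
  = (1 + 2∑ T_{4n}(u/2) q^{4n²})(1 + 2∑ T_{4n}(v/2) q^{4n²})
    + 4q² (∑ T_{4n-2}(u/2) q^{4n²-4n})(∑ T_{4n-2}(v/2) q^{4n²-4n})`. -/
theorem cheby_xyuv_even (x y u v : ℂ) (h1 : u + v = x * y) (h2 : u * v = x ^ 2 + y ^ 2 - 4) :
    (1 + 2 * mkSum (fun n => 2 * n ^ 2) fun n =>
        (Polynomial.Chebyshev.T ℂ (4 * (n : ℤ))).eval (x / 2)) *
      (1 + 2 * mkSum (fun n => 2 * n ^ 2) fun n =>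
        (Polynomial.Chebyshev.T ℂ (4 * (n : ℤ))).eval (y / 2)) =
    (1 + 2 * mkSum (fun n => 4 * n ^ 2) fun n =>
        (Polynomial.Chebyshev.T ℂ (4 * (n : ℤ))).eval (u / 2)) *
      (1 + 2 * mkSum (fun n => 4 * n ^ 2) fun n =>
        (Polynomial.Chebyshev.T ℂ (4 * (n : ℤ))).eval (v / 2)) +
    4 * PowerSeries.X ^ 2 *
      ((mkSum (fun n => 4 * n ^ 2 - 4 * n) fun n =>
          (Polynomial.Chebyshev.T ℂ (4 * (n : ℤ) - 2)).eval (u / 2)) *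
        (mkSum (fun n => 4 * n ^ 2 - 4 * n) fun n =>
          (Polynomial.Chebyshev.T ℂ (4 * (n : ℤ) - 2)).eval (v / 2))) := by
  obtain ⟨a, ha, rfl⟩ := IsAlgClosed.exists_add_inv_eq x
  obtain ⟨d, hd, rfl⟩ := IsAlgClosed.exists_add_inv_eq y
  have hsum : (a * d + (a * d)⁻¹) + (a / d + (a / d)⁻¹) = (a + a⁻¹) * (d + d⁻¹) := by
    field_simp
    ring
  have hprod : (a * d + (a * d)⁻¹) * (a / d + (a / d)⁻¹) =
      (a + a⁻¹) ^ 2 + (d + d⁻¹) ^ 2 - 4 := by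
    field_simp
    ring
  change chebyTheta 2 _ * chebyTheta 2 _ =
    chebyTheta 4 u * chebyTheta 4 v + 4 * X ^ 2 * (chebyThetaOdd u * chebyThetaOdd v)
  rcases eq_and_eq_or_eq_and_eq_of_add_eq_add_of_mul_eq_mul (h1.trans hsum.symm)
    (h2.trans hprod.symm) with ⟨rfl, rfl⟩ | ⟨rfl, rfl⟩
  · exact chebyTheta_mul_chebyTheta ha hd
  · rw [mul_comm (chebyTheta 4 _), mul_comm (chebyThetaOdd _)]
    exact chebyTheta_mul_chebyTheta ha hd
end
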